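/- Let 𝒞 be a Z2Z4-additive code and C = Φ(𝒞) the corresponding Z2Z4-linear code. Then K(C) = {Φ(u) : u ∈ 𝒞 and 2(u*v) ∈ 𝒞 for all v ∈ 𝒞}. -/

import Mathlib

/-- The ambient group `Z2^α × Z4^β`, with componentwise ring structure
(so `u * v` is the componentwise product). -/
abbrev Amb (α β : ℕ) := (Fin α → ZMod 2) × (Fin β → ZMod 4)

/-- The binary space `Z2^α × (Z2²)^β ≅ Z2^(α+2β)`. -/
abbrev Bin (α β : ℕ) := (Fin α → ZMod 2) × (Fin β → ZMod 2 × ZMod 2)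

/-- The Gray map `φ : Z4 → Z2²` with `φ(0)=(0,0), φ(1)=(0,1), φ(2)=(1,1), φ(3)=(1,0)`. -/
def grayPair (y : ZMod 4) : ZMod 2 × ZMod 2 :=
  match y.val with
  | 0 => (0, 0)
  | 1 => (0, 1)
  | 2 => (1, 1)
  | _ => (1, 0)

/-- The extended Gray map `Φ : Z2^α × Z4^β → Z2^(α+2β)`. -/
def Phi {α β : ℕ} (u : Amb α β) : Bin α β :=
  (u.1, fun i => grayPair (u.2 i))

/-- The kernel `K(C) = {x | x + C = C}` of a binary code. -/
def kernelK {α β : ℕ} (C : Set (Bin α β)) : Set (Bin α β) :=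
  {x | (fun y => x + y) '' C = C}

/-- The rank of a binary code: the `Z2`-dimension of its linear span. -/
noncomputable def rankOf {α β : ℕ} (C : Set (Bin α β)) : ℕ :=
  Module.finrank (ZMod 2) (Submodule.span (ZMod 2) C)

/-- The dimension of the kernel of a binary code. -/
noncomputable def kerDim {α β : ℕ} (C : Set (Bin α β)) : ℕ :=
  Module.finrank (ZMod 2) (Submodule.span (ZMod 2) (kernelK C))

/-- A `Z2Z4`-additive code `C ⊆ Z2^α × Z4^β` is of type `(α,β;γ,δ;κ)`:
`|C| = 2^(γ+2δ)`, the number of elements `x` with `2x = 0` is `2^(γ+δ)`, and `κ` is the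
`Z2`-dimension of the projection onto the first `α` coordinates of `{x ∈ C | 2x = 0}`. -/
def IsTypeOf (α β γ δ κ : ℕ) (C : AddSubgroup (Amb α β)) : Prop :=
  Nat.card C = 2 ^ (γ + 2 * δ) ∧
  Nat.card {x : Amb α β | x ∈ C ∧ 2 • x = 0} = 2 ^ (γ + δ) ∧
  Module.finrank (ZMod 2)
    (Submodule.span (ZMod 2) (Prod.fst '' {x : Amb α β | x ∈ C ∧ 2 • x = 0})) = κ

/-!
In characteristic two, `x + D = D` already follows from `x + D ⊆ D`.
The Gray map is injective and satisfies `Φ(u) + Φ(v) = Φ(u + v + 2(u*v))`, which is the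
identity `φ(a) + φ(b) = φ(a + b + 2ab)` checked on `Z4`. Hence for `u, v ∈ 𝒞` the word
`Φ(u) + Φ(v)` lies in `Φ(𝒞)` if and only if `2(u*v) ∈ 𝒞`, and since `0 ∈ Φ(𝒞)` every kernel
element is itself of the form `Φ(u)` with `u ∈ 𝒞`.
-/

lemma mem_kernelK_iff {α β : ℕ} {D : Set (Bin α β)} {x : Bin α β} :
    x ∈ kernelK D ↔ ∀ y ∈ D, x + y ∈ D := by
  refine ⟨fun hx y hy => hx ▸ ⟨y, hy, rfl⟩, fun hx => ?_⟩
  refine Set.Subset.antisymm (Set.image_subset_iff.2 hx) fun y hy => ⟨x + y, hx y hy, ?_⟩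
  change x + (x + y) = y
  rw [← add_assoc, ZModModule.add_self, zero_add]

lemma grayPair_injective : Function.Injective grayPair := by decide

lemma grayPair_add (a b : ZMod 4) : grayPair a + grayPair b = grayPair (a + b + 2 * (a * b)) := by
  revert a b
  decide

lemma Phi_injective {α β : ℕ} : Function.Injective (Phi (α := α) (β := β)) := by
  rintro ⟨a, b⟩ ⟨c, d⟩ h
  obtain ⟨rfl, hbd⟩ := Prod.mk.inj h
  exact Prod.ext rfl (funext fun i => grayPair_injective (congrFun hbd i))

lemma Phi_zero {α β : ℕ} : Phi (0 : Amb α β) = 0 :=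
  Prod.ext rfl (funext fun _ => rfl)

lemma Phi_add_Phi {α β : ℕ} (u v : Amb α β) :
    Phi u + Phi v = Phi (u + v + 2 * (u * v)) := by
  refine Prod.ext (funext fun i => ?_) (funext fun i => grayPair_add (u.2 i) (v.2 i))
  change u.1 i + v.1 i = u.1 i + v.1 i + 2 * (u.1 i * v.1 i)
  rw [show (2 : ZMod 2) = 0 from rfl, zero_mul, add_zero]

lemma Phi_add_Phi_mem_image_iff {α β : ℕ} {C : AddSubgroup (Amb α β)} {u v : Amb α β}
    (hu : u ∈ C) (hv : v ∈ C) :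
    Phi u + Phi v ∈ Phi '' (C : Set (Amb α β)) ↔ 2 * (u * v) ∈ C := by
  rw [Phi_add_Phi, Phi_injective.mem_set_image]
  exact C.add_mem_cancel_left (C.add_mem hu hv)

/-- `K(Φ(𝒞)) = {Φ(u) : u ∈ 𝒞, ∀ v ∈ 𝒞, 2(u*v) ∈ 𝒞}`. -/
theorem kernel_eq_gray_image (α β : ℕ) (C : AddSubgroup (Amb α β)) :
    kernelK (Phi '' (C : Set (Amb α β))) =
      Phi '' {u : Amb α β | u ∈ C ∧ ∀ v ∈ C, 2 * (u * v) ∈ C} := by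
  ext x
  rw [mem_kernelK_iff]
  constructor
  · intro hx
    obtain ⟨u, hu, rfl⟩ : x ∈ Phi '' (C : Set (Amb α β)) := by
      simpa only [Phi_zero, add_zero] using hx _ ⟨0, C.zero_mem, rfl⟩
    exact ⟨u, ⟨hu, fun v hv => (Phi_add_Phi_mem_image_iff hu hv).1 (hx _ ⟨v, hv, rfl⟩)⟩, rfl⟩
  · rintro ⟨u, ⟨hu, h2⟩, rfl⟩ _ ⟨v, hv, rfl⟩
    exact (Phi_add_Phi_mem_image_iff hu hv).2 (h2 v hv)
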